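/- arXiv:1410.3544 — 3 statements merged into one kernel-verified Lean document; each statement's English description precedes it below -/
import Mathlib

section
/- The number of ranked binary tree topologies on n labelled leaves in which all n−1 internal nodes have pairwise distinct ranks is (n−1)! · n! / 2^(n−1). -/
noncomputable section

/-- Partitions of the taxon set `{1, …, n}`. -/
abbrev TreePartition (n : ℕ) := Finpartition (Finset.univ : Finset (Fin n))

/-- A ranked binary tree topology on `n` labelled leaves, encoded as a maximal merging
chain of partitions: it starts with the partition into singletons, ends with the one-block
partition, and each step merges exactly two blocks. -/
def IsMergeChain (n : ℕ) (c : Fin n → TreePartition n) : Prop :=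
  (∀ j : Fin n, (j : ℕ) = 0 →
      (c j).parts = Finset.univ.image (fun x : Fin n => ({x} : Finset (Fin n)))) ∧
  (∀ j : Fin n, (j : ℕ) = n - 1 → (c j).parts = {Finset.univ}) ∧
  (∀ j : Fin n, ∀ h : (j : ℕ) + 1 < n,
    ∃ A ∈ (c j).parts, ∃ B ∈ (c j).parts, A ≠ B ∧
      (c ⟨(j : ℕ) + 1, h⟩).parts = insert (A ∪ B) (((c j).parts.erase A).erase B))

/-- The set of ranked binary tree topologies on `n` taxa with all internal nodes of
pairwise distinct ranks. -/
abbrev RankedTopology (n : ℕ) := {c : Fin n → TreePartition n // IsMergeChain n c}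

/-!
A ranked topology is the same as a walk of length `n - 1` that starts at the partition into
singletons and merges two blocks at each step. A partition with `k` blocks has exactly
`k.choose 2` such merges, each leaving `k - 1` blocks, so the number of walks is
`∏_{k=2}^{n} k.choose 2 = (n - 1)! * n! / 2 ^ (n - 1)`.
-/

open Finset

namespace Finpartition

theorem parts_eq_singleton_of_card_parts_eq_one {α : Type*} [Lattice α] [OrderBot α] {a : α}
    {P : Finpartition a} (h : #P.parts = 1) : P.parts = {a} := by
  obtain ⟨C, hC⟩ := card_eq_one.1 h
  have hsup := P.sup_parts
  rw [hC, sup_singleton, id_eq] at hsup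
  rw [hC, hsup]

variable {α : Type*} [DecidableEq α] {s : Finset α} {P Q : Finpartition s} {A B : Finset α}

def IsMerge (P Q : Finpartition s) : Prop :=
  ∃ A ∈ P.parts, ∃ B ∈ P.parts, A ≠ B ∧ Q.parts = insert (A ∪ B) ((P.parts.erase A).erase B)

theorem union_notMem_parts (hA : A ∈ P.parts) (hB : B ∈ P.parts) (hAB : A ≠ B) :
    A ∪ B ∉ P.parts := by
  intro h
  obtain ⟨a, ha⟩ := P.nonempty_of_mem_parts hA
  obtain ⟨b, hb⟩ := P.nonempty_of_mem_parts hB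
  exact hAB <| (P.eq_of_mem_parts hA h ha (mem_union_left _ ha)).trans
    (P.eq_of_mem_parts hB h hb (mem_union_right _ hb)).symm

def merge (P : Finpartition s) (hA : A ∈ P.parts) (hB : B ∈ P.parts) (hAB : A ≠ B) :
    Finpartition s :=
  (P.ofSubset ((erase_subset B _).trans (erase_subset A _)) rfl).extend
    (b := A ∪ B) (by simp [P.ne_empty hA])
    (by
      rw [Finset.disjoint_sup_left]
      intro C hC
      simp only [mem_erase] at hC
      exact disjoint_union_right.2 ⟨P.disjoint hC.2.2 hA hC.2.1, P.disjoint hC.2.2 hB hC.1⟩)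
    (by
      conv_rhs =>
        rw [← P.sup_parts, ← insert_erase hA, ← insert_erase (mem_erase.2 ⟨hAB.symm, hB⟩)]
      simp only [sup_insert, id_eq, sup_eq_union]
      ac_rfl)

theorem parts_sdiff_eq_pair (hA : A ∈ P.parts) (hB : B ∈ P.parts) (hAB : A ≠ B)
    (hQ : Q.parts = insert (A ∪ B) ((P.parts.erase A).erase B)) :
    P.parts \ Q.parts = {A, B} := by
  have := union_notMem_parts hA hB hAB
  ext C
  simp only [hQ, mem_sdiff, mem_insert, mem_erase, mem_singleton]
  grind

/-- A merge is recovered from the pair of blocks it removes. -/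
theorem IsMerge.parts_eq (h : IsMerge P Q) :
    Q.parts = insert ((P.parts \ Q.parts).sup id) (P.parts \ (P.parts \ Q.parts)) := by
  obtain ⟨A, hA, B, hB, hAB, hQ⟩ := h
  rw [parts_sdiff_eq_pair hA hB hAB hQ, hQ, sup_insert, sup_singleton]
  congr 1
  ext C
  simp only [mem_erase, mem_sdiff, mem_insert, mem_singleton]
  tauto

theorem IsMerge.card_parts (h : IsMerge P Q) : #Q.parts + 1 = #P.parts := by
  obtain ⟨A, hA, B, hB, hAB, hQ⟩ := h
  have hB' : B ∈ P.parts.erase A := mem_erase.2 ⟨hAB.symm, hB⟩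
  have hAB' : A ∪ B ∉ (P.parts.erase A).erase B := fun h ↦
    union_notMem_parts hA hB hAB (mem_of_mem_erase (mem_of_mem_erase h))
  have htwo : 2 ≤ #P.parts := one_lt_card.2 ⟨A, hA, B, hB, hAB⟩
  rw [hQ, card_insert_of_notMem hAB', card_erase_of_mem hB', card_erase_of_mem hA]
  omega

theorem card_isMerge (P : Finpartition s) :
    Nat.card {Q // IsMerge P Q} = (#P.parts).choose 2 := by
  let removed : {Q // IsMerge P Q} → P.parts.powersetCard 2 := fun Q ↦
    ⟨P.parts \ Q.1.parts, by
      obtain ⟨A, hA, B, hB, hAB, hQ⟩ := Q.2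
      rw [parts_sdiff_eq_pair hA hB hAB hQ, mem_powersetCard, card_pair hAB]
      exact ⟨insert_subset hA (singleton_subset_iff.2 hB), rfl⟩⟩
  have hremoved : removed.Bijective := by
    constructor
    · intro Q₁ Q₂ h
      have h' : P.parts \ Q₁.1.parts = P.parts \ Q₂.1.parts := congrArg Subtype.val h
      exact Subtype.ext <| Finpartition.ext <| by rw [Q₁.2.parts_eq, Q₂.2.parts_eq, h']
    · rintro ⟨S, hS⟩
      obtain ⟨hSP, hS2⟩ := mem_powersetCard.1 hS
      obtain ⟨A, B, hAB, rfl⟩ := card_eq_two.1 hS2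
      have hA := hSP (mem_insert_self A {B})
      have hB := hSP (mem_insert_of_mem (mem_singleton_self B))
      exact ⟨⟨P.merge hA hB hAB, A, hA, B, hB, hAB, rfl⟩,
        Subtype.ext (parts_sdiff_eq_pair hA hB hAB rfl)⟩
  rw [Nat.card_eq_of_bijective removed hremoved, Nat.card_eq_finsetCard, card_powersetCard]

end Finpartition

section RelWalks

variable {α : Type*}

def relWalks (r : α → α → Prop) (a : α) (m : ℕ) : Set (Fin (m + 1) → α) :=
  {c | c 0 = a ∧ ∀ i : Fin m, r (c i.castSucc) (c i.succ)}

variable {r : α → α → Prop}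

theorem card_relWalks_zero (a : α) : Nat.card (relWalks r a 0) = 1 := by
  rw [Nat.card_eq_one_iff_exists]
  refine ⟨⟨fun _ ↦ a, rfl, Fin.elim0⟩, fun c ↦ Subtype.ext (funext fun i ↦ ?_)⟩
  rw [Fin.fin_one_eq_zero i]
  exact c.2.1

theorem cons_mem_relWalks {a b : α} {m : ℕ} {c : Fin (m + 1) → α} (hab : r a b)
    (hc : c ∈ relWalks r b m) : Fin.cons a c ∈ relWalks r a (m + 1) := by
  refine ⟨rfl, fun i ↦ ?_⟩
  cases i using Fin.cases with
  | zero => simpa [hc.1] using hab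
  | succ i => simpa using hc.2 i

theorem tail_mem_relWalks {a : α} {m : ℕ} {c : Fin (m + 2) → α}
    (hc : c ∈ relWalks r a (m + 1)) : Fin.tail c ∈ relWalks r (c 1) m :=
  ⟨rfl, fun i ↦ hc.2 i.succ⟩

theorem card_relWalks_succ (a : α) (m : ℕ) :
    Nat.card (relWalks r a (m + 1)) = Nat.card (Σ b : {b // r a b}, relWalks r b m) := by
  refine (Nat.card_eq_of_bijective
    (fun bc : Σ b : {b // r a b}, relWalks r b m ↦
      (⟨Fin.cons a bc.2, cons_mem_relWalks bc.1.2 bc.2.2⟩ : relWalks r a (m + 1))) ⟨?_, ?_⟩).symm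
  · rintro ⟨b₁, c₁, hc₁⟩ ⟨b₂, c₂, hc₂⟩ h
    obtain rfl : c₁ = c₂ := Fin.cons_right_injective (α := fun _ ↦ α) a (congrArg Subtype.val h)
    obtain rfl : b₁ = b₂ := Subtype.ext (hc₁.1.symm.trans hc₂.1)
    rfl
  · rintro ⟨c, hc⟩
    have hstep : r a (c 1) := hc.1 ▸ hc.2 0
    refine ⟨⟨⟨c 1, hstep⟩, Fin.tail c, tail_mem_relWalks hc⟩, Subtype.ext ?_⟩
    dsimp only
    rw [← hc.1, Fin.cons_self_tail]

variable {rank : α → ℕ}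

theorem rank_add_of_mem_relWalks (hrank : ∀ a b, r a b → rank b + 1 = rank a)
    {a : α} {m : ℕ} {c : Fin (m + 1) → α} (hc : c ∈ relWalks r a m) (i : Fin (m + 1)) :
    rank (c i) + i = rank a := by
  induction i using Fin.induction with
  | zero => simp [hc.1]
  | succ i ih =>
    have := hrank _ _ (hc.2 i)
    rw [Fin.val_castSucc] at ih
    rw [Fin.val_succ]
    omega

theorem card_relWalks_eq_prod [Finite α] {deg : ℕ → ℕ}
    (hrank : ∀ a b, r a b → rank b + 1 = rank a) (hdeg : ∀ a, Nat.card {b // r a b} = deg (rank a))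
    (k m : ℕ) (a : α) (ha : rank a = m + k) :
    Nat.card (relWalks r a m) = ∏ i ∈ range m, deg (i + k + 1) := by
  induction m generalizing a with
  | zero => rw [card_relWalks_zero, prod_range_zero]
  | succ m ih =>
    have hsucc (b : {b // r a b}) : Nat.card (relWalks r b m) = ∏ i ∈ range m, deg (i + k + 1) :=
      ih b (by have := hrank a b b.2; omega)
    have := Fintype.ofFinite {b // r a b}
    rw [card_relWalks_succ, Nat.card_sigma, Finset.sum_congr rfl fun b _ ↦ hsucc b, sum_const,
      card_univ, ← Nat.card_eq_fintype_card, hdeg, ha, prod_range_succ, smul_eq_mul, mul_comm,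
      add_right_comm]

end RelWalks

open scoped Nat in
theorem prod_range_choose_two_mul_two_pow (m : ℕ) :
    (∏ i ∈ range m, (i + 2).choose 2) * 2 ^ m = m ! * (m + 1)! := by
  induction m with
  | zero => rfl
  | succ m ih =>
    have hchoose : (m + 2).choose 2 * 2 = (m + 2) * (m + 1) := by
      rw [← Nat.add_one_mul_choose_eq, Nat.choose_one_right]
    calc (∏ i ∈ range (m + 1), (i + 2).choose 2) * 2 ^ (m + 1)
        = (∏ i ∈ range m, (i + 2).choose 2) * 2 ^ m * ((m + 2).choose 2 * 2) := by
          rw [prod_range_succ, pow_succ]; ring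
      _ = (m + 1)! * (m + 2)! := by
          rw [ih, hchoose, Nat.factorial_succ (m + 1), Nat.factorial_succ m]; ring

open Finpartition in
theorem isMergeChain_iff_mem_relWalks {m : ℕ} (c : Fin (m + 1) → TreePartition (m + 1)) :
    IsMergeChain (m + 1) c ↔ c ∈ relWalks IsMerge ⊥ m := by
  constructor
  · rintro ⟨hfirst, -, hstep⟩
    refine ⟨Finpartition.ext ?_, fun i ↦ hstep i.castSucc (by simp)⟩
    rw [hfirst 0 rfl, parts_bot, map_eq_image]
    rfl
  · intro hc
    refine ⟨fun j hj ↦ ?_, fun j hj ↦ ?_, fun j hj ↦ hc.2 ⟨j, by omega⟩⟩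
    · obtain rfl : j = 0 := Fin.ext hj
      rw [hc.1, parts_bot, map_eq_image]
      rfl
    · apply parts_eq_singleton_of_card_parts_eq_one
      have := rank_add_of_mem_relWalks (fun _ _ h ↦ IsMerge.card_parts h) hc j
      rw [card_bot, card_univ, Fintype.card_fin] at this
      omega

theorem card_ranked_topologies_general (n : ℕ) :
    Nat.card (RankedTopology n) =
      (Nat.factorial (n - 1) * Nat.factorial n) / 2 ^ (n - 1) := by
  cases n with
  | zero =>
    -- the empty chain; the right side is `1` because `0 - 1 = 0` in `ℕ`
    show Nat.card _ = 1
    rw [Nat.card_eq_one_iff_exists]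
    exact ⟨⟨finZeroElim, finZeroElim, finZeroElim, finZeroElim⟩,
      fun c ↦ Subtype.ext (funext finZeroElim)⟩
  | succ m =>
    have hwalks : Nat.card (RankedTopology (m + 1)) =
        Nat.card (relWalks Finpartition.IsMerge (⊥ : TreePartition (m + 1)) m) :=
      Nat.card_congr (Equiv.subtypeEquivRight isMergeChain_iff_mem_relWalks)
    have hcount := card_relWalks_eq_prod (rank := fun P : TreePartition (m + 1) ↦ #P.parts)
      (deg := fun k ↦ k.choose 2) (fun _ _ h ↦ h.card_parts) Finpartition.card_isMerge 1 m ⊥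
      (by simp)
    rw [hwalks, hcount, Nat.add_sub_cancel, ← prod_range_choose_two_mul_two_pow,
      Nat.mul_div_cancel _ (by positivity)]

/-- The number of ranked binary tree topologies on `n` labelled leaves in which all
internal nodes have pairwise distinct ranks is `(n-1)! ⬝ n! / 2^(n-1)`. -/
theorem card_ranked_topologies (n : ℕ) (hn : 1 ≤ n) :
    Nat.card (RankedTopology n) =
      (Nat.factorial (n - 1) * Nat.factorial n) / 2 ^ (n - 1) :=
  card_ranked_topologies_general n
end
end

section
/- In the connected cubical complex tau-space, if three (k+2)-cubes C1, C2, C3 pairwise share distinct (k+1)-cubes and all share a common k-cube, where C1 is obtained by setting coordinate τ_i = 0, C2 by τ_j = 0, C3 by τ_r = 0 with all other coordinates positive, then i, j, r are pairwise distinct, and the three cubes are contained in a common (k+3)-cube obtained from C1 by resolving τ_i in the way it is resolved in C2 and C3. -/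
noncomputable section

/-- Two ranked topologies represent the same face of τ-space (the face where the
coordinates in `Z` vanish) iff they agree at every level of the merging chain not
forgotten by a vanishing coordinate `τᵢ = 0` with `i ≥ 1` in `Z`. -/
def EqOffZeroSet (n : ℕ) (Z : Finset (Fin (n - 1))) (c c' : RankedTopology n) : Prop :=
  ∀ j : Fin n, (∀ i ∈ Z, 1 ≤ (i : ℕ) → (i : ℕ) ≠ (j : ℕ)) → c.1 j = c'.1 j

/-- Extracting the second element of a 2-element set containing `i`. -/
lemma pair_of_card_two {α : Type*} [DecidableEq α] {s : Finset α} {i : α}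
    (h2 : s.card = 2) (hi : i ∈ s) : ∃ a, a ≠ i ∧ s = {i, a} := by
  obtain ⟨x, y, hxy, rfl⟩ := Finset.card_eq_two.mp h2
  rcases Finset.mem_insert.mp hi with rfl | h
  · exact ⟨y, fun h => hxy h.symm, rfl⟩
  · rw [Finset.mem_singleton] at h; subst h
    exact ⟨x, hxy, Finset.pair_comm x i⟩

lemma eq_pair_of_card_two {α : Type*} [DecidableEq α] {s : Finset α} {i j : α}
    (h2 : s.card = 2) (hi : i ∈ s) (hj : j ∈ s) (hij : i ≠ j) : s = {i, j} := by
  refine (Finset.eq_of_subset_of_card_le ?_ ?_).symm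
  · intro x hx
    rcases Finset.mem_insert.mp hx with rfl | hx
    · exact hi
    · rw [Finset.mem_singleton] at hx; subst hx; exact hj
  · rw [h2, Finset.card_insert_of_notMem (by simp [hij]), Finset.card_singleton]

/-- Gromov's link condition holds in τ-space: if three `(k+2)`-cubes `C₁ = (c₁, τᵢ = 0)`,
`C₂ = (c₂, τⱼ = 0)`, `C₃ = (c₃, τᵣ = 0)` of τ-space are pairwise distinct, pairwise share
common distinct `(k+1)`-cubes, and all share a common `k`-cube, then `i`, `j`, `r` are
pairwise distinct and the three cubes are contained in a common `(k+3)`-cube, obtained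
from `C₁` by resolving `τᵢ` the way it is resolved in `C₂` and `C₃`. -/
theorem tau_space_link_condition (n : ℕ) (hn : 3 ≤ n)
    (c1 c2 c3 : RankedTopology n) (i j r : Fin (n - 1))
    -- the three (k+2)-cubes are pairwise distinct
    (h12 : ¬ (i = j ∧ EqOffZeroSet n {i} c1 c2))
    (h23 : ¬ (j = r ∧ EqOffZeroSet n {j} c2 c3))
    (h13 : ¬ (i = r ∧ EqOffZeroSet n {i} c1 c3))
    -- they pairwise share (k+1)-cubes
    (Z12 Z23 Z13 : Finset (Fin (n - 1)))
    (hZ12 : i ∈ Z12 ∧ j ∈ Z12 ∧ Z12.card = 2 ∧ EqOffZeroSet n Z12 c1 c2)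
    (hZ23 : j ∈ Z23 ∧ r ∈ Z23 ∧ Z23.card = 2 ∧ EqOffZeroSet n Z23 c2 c3)
    (hZ13 : i ∈ Z13 ∧ r ∈ Z13 ∧ Z13.card = 2 ∧ EqOffZeroSet n Z13 c1 c3)
    -- the shared (k+1)-cubes are pairwise different
    (hdiff : Z12 ≠ Z23 ∧ Z23 ≠ Z13 ∧ Z12 ≠ Z13)
    -- all three share a common k-cube
    (Z0 : Finset (Fin (n - 1)))
    (hZ0 : i ∈ Z0 ∧ j ∈ Z0 ∧ r ∈ Z0 ∧ Z0.card = 3 ∧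
      EqOffZeroSet n Z0 c1 c2 ∧ EqOffZeroSet n Z0 c2 c3) :
    (i ≠ j ∧ j ≠ r ∧ i ≠ r) ∧
    ∃ c : RankedTopology n, EqOffZeroSet n {i} c c1 ∧
      EqOffZeroSet n {j} c c2 ∧ EqOffZeroSet n {r} c c3 := by
  classical
  obtain ⟨hiZ12, hjZ12, hc12, hE12⟩ := hZ12
  obtain ⟨hjZ23, hrZ23, hc23, hE23⟩ := hZ23
  obtain ⟨hiZ13, hrZ13, hc13, hE13⟩ := hZ13
  -- distinctness
  have hij : i ≠ j := by
    intro hij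
    subst hij
    by_cases hir : i = r
    · -- i = j = r : use the functional argument
      subst hir
      obtain ⟨a, ha, hZa⟩ := pair_of_card_two hc12 hiZ12
      obtain ⟨b, hb, hZb⟩ := pair_of_card_two hc23 hjZ23
      obtain ⟨c, hc, hZc⟩ := pair_of_card_two hc13 hiZ13
      have hba : b ≠ a := by
        intro h; subst h; exact hdiff.1 (hZa.trans hZb.symm)
      have hca : c ≠ a := by
        intro h; subst h; exact hdiff.2.2 (hZa.trans hZc.symm)
      apply h12
      refine ⟨rfl, ?_⟩
      intro lvl hlvl
      have hi' : 1 ≤ (i : ℕ) → (i : ℕ) ≠ (lvl : ℕ) := hlvl i (Finset.mem_singleton_self i)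
      by_cases hal : 1 ≤ (a : ℕ) ∧ (a : ℕ) = (lvl : ℕ)
      · -- level lvl = a : go through c3
        have e23 : c2.1 lvl = c3.1 lvl := by
          apply hE23 lvl
          intro x hx
          rw [hZb] at hx
          rcases Finset.mem_insert.mp hx with rfl | hx
          · exact hi'
          · rw [Finset.mem_singleton] at hx; subst hx
            intro _; rw [← hal.2]; exact fun h => hba (Fin.ext h)
        have e13 : c1.1 lvl = c3.1 lvl := by
          apply hE13 lvl
          intro x hx
          rw [hZc] at hx
          rcases Finset.mem_insert.mp hx with rfl | hx
          · exact hi'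
          · rw [Finset.mem_singleton] at hx; subst hx
            intro _; rw [← hal.2]; exact fun h => hca (Fin.ext h)
        rw [e13, e23]
      · apply hE12 lvl
        intro x hx
        rw [hZa] at hx
        rcases Finset.mem_insert.mp hx with rfl | hx
        · exact hi'
        · rw [Finset.mem_singleton] at hx; subst hx
          intro h1 h2
          exact hal ⟨h1, h2⟩
    · -- i = j ≠ r : Z23 = Z13
      have e1 : Z23 = {i, r} := eq_pair_of_card_two hc23 hjZ23 hrZ23 hir
      have e2 : Z13 = {i, r} := eq_pair_of_card_two hc13 hiZ13 hrZ13 hir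
      exact hdiff.2.1 (e1.trans e2.symm)
  have hjr : j ≠ r := by
    intro hjr
    subst hjr
    have e1 : Z12 = {i, j} := eq_pair_of_card_two hc12 hiZ12 hjZ12 hij
    have e2 : Z13 = {i, j} := eq_pair_of_card_two hc13 hiZ13 hrZ13 hij
    exact hdiff.2.2 (e1.trans e2.symm)
  have hir : i ≠ r := by
    intro hir
    subst hir
    have e1 : Z12 = {i, j} := eq_pair_of_card_two hc12 hiZ12 hjZ12 hij
    have e2 : Z23 = {i, j} := by
      rw [Finset.pair_comm]
      exact eq_pair_of_card_two hc23 hjZ23 hrZ23 (Ne.symm hij)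
    exact hdiff.1 (e1.trans e2.symm)
  refine ⟨⟨hij, hjr, hir⟩, ?_⟩
  -- value-level inequalities
  have vij : (i : ℕ) ≠ (j : ℕ) := fun h => hij (Fin.ext h)
  have vjr : (j : ℕ) ≠ (r : ℕ) := fun h => hjr (Fin.ext h)
  have vir : (i : ℕ) ≠ (r : ℕ) := fun h => hir (Fin.ext h)
  have hZ12eq : Z12 = {i, j} := eq_pair_of_card_two hc12 hiZ12 hjZ12 hij
  have hZ23eq : Z23 = {j, r} := eq_pair_of_card_two hc23 hjZ23 hrZ23 hjr
  have hZ13eq : Z13 = {i, r} := eq_pair_of_card_two hc13 hiZ13 hrZ13 hir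
  -- pointwise agreements off the pairs
  have h12' : ∀ lvl : Fin n, ((i : ℕ) ≠ (lvl : ℕ) ∨ ¬ 1 ≤ (i : ℕ)) →
      ((j : ℕ) ≠ (lvl : ℕ) ∨ ¬ 1 ≤ (j : ℕ)) →
      c1.1 lvl = c2.1 lvl := by
    intro lvl h1 h2
    apply hE12 lvl
    intro x hx
    rw [hZ12eq] at hx
    rcases Finset.mem_insert.mp hx with rfl | hx
    · intro hg
      rcases h1 with h1 | h1
      · exact h1
      · exact absurd hg h1
    · rw [Finset.mem_singleton] at hx; subst hx
      intro hg
      rcases h2 with h2 | h2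
      · exact h2
      · exact absurd hg h2
  have h23' : ∀ lvl : Fin n, (j : ℕ) ≠ (lvl : ℕ) → (r : ℕ) ≠ (lvl : ℕ) →
      c2.1 lvl = c3.1 lvl := by
    intro lvl h1 h2
    apply hE23 lvl
    intro x hx
    rw [hZ23eq] at hx
    rcases Finset.mem_insert.mp hx with rfl | hx
    · exact fun _ => h1
    · rw [Finset.mem_singleton] at hx; subst hx; exact fun _ => h2
  have h13' : ∀ lvl : Fin n, ((i : ℕ) ≠ (lvl : ℕ) ∨ ¬ 1 ≤ (i : ℕ)) →
      ((r : ℕ) ≠ (lvl : ℕ) ∨ ¬ 1 ≤ (r : ℕ)) →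
      c1.1 lvl = c3.1 lvl := by
    intro lvl h1 h2
    apply hE13 lvl
    intro x hx
    rw [hZ13eq] at hx
    rcases Finset.mem_insert.mp hx with rfl | hx
    · intro hg
      rcases h1 with h1 | h1
      · exact h1
      · exact absurd hg h1
    · rw [Finset.mem_singleton] at hx; subst hx
      intro hg
      rcases h2 with h2 | h2
      · exact h2
      · exact absurd hg h2
  -- the common cube: c1 with level i resolved as in c2 (and c3)
  set f : Fin n → TreePartition n :=
    fun lvl => if 1 ≤ (i : ℕ) ∧ (lvl : ℕ) = (i : ℕ) then c2.1 lvl else c1.1 lvl with hf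
  have fdef1 : ∀ lvl : Fin n, ¬ (1 ≤ (i : ℕ) ∧ (lvl : ℕ) = (i : ℕ)) → f lvl = c1.1 lvl := by
    intro lvl h; simp only [hf, if_neg h]
  have fdef2 : ∀ lvl : Fin n, 1 ≤ (i : ℕ) → (lvl : ℕ) = (i : ℕ) → f lvl = c2.1 lvl := by
    intro lvl h1 h2; simp only [hf, if_pos (And.intro h1 h2)]
  have hfmc : IsMergeChain n f := by
    refine ⟨?_, ?_, ?_⟩
    · intro lvl hlvl
      rw [fdef1 lvl (by omega)]
      exact c1.2.1 lvl hlvl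
    · intro lvl hlvl
      have : (i : ℕ) < n - 1 := i.isLt
      rw [fdef1 lvl (by omega)]
      exact c1.2.2.1 lvl hlvl
    · intro lvl hlt
      have key : ∀ X : RankedTopology n, f lvl = X.1 lvl →
          f ⟨(lvl : ℕ) + 1, hlt⟩ = X.1 ⟨(lvl : ℕ) + 1, hlt⟩ →
          ∃ A ∈ (f lvl).parts, ∃ B ∈ (f lvl).parts, A ≠ B ∧
            (f ⟨(lvl : ℕ) + 1, hlt⟩).parts =
              insert (A ∪ B) (((f lvl).parts.erase A).erase B) := by
        intro X e1 e2
        rw [e1, e2]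
        exact X.2.2.2 lvl hlt
      by_cases hg : 1 ≤ (i : ℕ)
      · by_cases hLa : (lvl : ℕ) = (i : ℕ)
        · -- step i → i+1
          by_cases hj1 : (j : ℕ) = (lvl : ℕ) + 1
          · -- j = i + 1 : go through c3
            apply key c3
            · rw [fdef2 lvl hg hLa]
              exact h23' lvl (by omega) (by omega)
            · rw [fdef1 _ (by simp; omega)]
              exact h13' _ (Or.inl (by simp; omega)) (Or.inl (by simp; omega))
          · apply key c2
            · exact fdef2 lvl hg hLa
            · rw [fdef1 _ (by simp; omega)]
              exact h12' _ (Or.inl (by simp; omega)) (Or.inl (by simp; omega))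
        · by_cases hLb : (lvl : ℕ) + 1 = (i : ℕ)
          · -- step i-1 → i
            by_cases hj0 : (j : ℕ) = (lvl : ℕ)
            · -- j = i - 1 : go through c3
              apply key c3
              · rw [fdef1 lvl (by omega)]
                exact h13' lvl (Or.inl (by omega)) (Or.inl (by omega))
              · rw [fdef2 _ hg (by simp [hLb])]
                exact h23' _ (by simp; omega) (by simp; omega)
            · apply key c2
              · rw [fdef1 lvl (by omega)]
                exact h12' lvl (Or.inl (by omega)) (Or.inl (by omega))
              · exact fdef2 _ hg (by simp [hLb])
          · apply key c1
            · exact fdef1 lvl (by omega)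
            · exact fdef1 _ (by simp; omega)
      · apply key c1
        · exact fdef1 lvl (by omega)
        · exact fdef1 _ (by omega)
  refine ⟨⟨f, hfmc⟩, ?_, ?_, ?_⟩
  · -- EqOffZeroSet {i} c c1
    intro lvl hlvl
    have hi' := hlvl i (Finset.mem_singleton_self i)
    show f lvl = c1.1 lvl
    apply fdef1
    intro ⟨h1, h2⟩
    exact hi' h1 h2.symm
  · -- EqOffZeroSet {j} c c2
    intro lvl hlvl
    have hj' := hlvl j (Finset.mem_singleton_self j)
    show f lvl = c2.1 lvl
    by_cases hc : 1 ≤ (i : ℕ) ∧ (lvl : ℕ) = (i : ℕ)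
    · exact fdef2 lvl hc.1 hc.2
    · rw [fdef1 lvl hc]
      apply h12' lvl
      · by_cases hg : 1 ≤ (i : ℕ)
        · exact Or.inl fun h => hc ⟨hg, h.symm⟩
        · exact Or.inr hg
      · by_cases hg : 1 ≤ (j : ℕ)
        · exact Or.inl (hj' hg)
        · exact Or.inr hg
  · -- EqOffZeroSet {r} c c3
    intro lvl hlvl
    have hr' := hlvl r (Finset.mem_singleton_self r)
    show f lvl = c3.1 lvl
    by_cases hc : 1 ≤ (i : ℕ) ∧ (lvl : ℕ) = (i : ℕ)
    · rw [fdef2 lvl hc.1 hc.2]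
      apply h23' lvl
      · rw [hc.2]; exact vij.symm
      · rw [hc.2]; exact vir.symm
    · rw [fdef1 lvl hc]
      apply h13' lvl
      · by_cases hg : 1 ≤ (i : ℕ)
        · exact Or.inl fun h => hc ⟨hg, h.symm⟩
        · exact Or.inr hg
      · by_cases hg : 1 ≤ (r : ℕ)
        · exact Or.inl (hr' hg)
        · exact Or.inr hg
end
end

section
/- For two 4-taxon ultrametric trees T = {(12|3|4):1, (12|34):8, (1234):9} and R = {(13|2|4):1, (13|24):8, (1234):9} (clade heights after the colon), the shortest cone-path between them in t-space passes through the star tree of height 6 and has length 2√38, whereas the path through the trees ((1,2):4, 3, 4):8, ((1,3,2):6, 4):8, and ((1,3):4, 2, 4):7 has length √10 + √8 + √6 + √14, and √10 + √8 + √6 + √14 < 2√38. -/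
noncomputable section

/-- The four intermediate points of the alternative path, as points of `ℝ³` of t-space
coordinates. -/
def pt (a b c : ℝ) : EuclideanSpace ℝ (Fin 3) :=
  (WithLp.equiv 2 (Fin 3 → ℝ)).symm ![a, b, c]

lemma dist_pt (a b c a' b' c' : ℝ) :
    dist (pt a b c) (pt a' b' c') =
      Real.sqrt ((a - a') ^ 2 + (b - b') ^ 2 + (c - c') ^ 2) := by
  rw [EuclideanSpace.dist_eq]
  congr 1
  simp only [pt, Fin.sum_univ_three]
  simp [Real.dist_eq, sq_abs]

/-- For the 4-taxon trees `T = {(12|3|4):1, (12|34):8, (1234):9}` (coordinates `(1,8,9)`)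
and `R = {(13|2|4):1, (13|24):8, (1234):9}` (coordinates `(1,8,9)`), the shortest
cone-path passes through the star tree of height `6` and has length `2√38`, whereas the
four-segment path through `(4,8,8)`, `(6,6,8)` and `(4,7,7)` has length
`√10 + √8 + √6 + √14`, which is strictly smaller than `2√38`. -/
theorem cone_path_not_shortest :
    (∀ h : ℝ, 2 * Real.sqrt 38 ≤
        Real.sqrt ((h - 1) ^ 2 + (h - 8) ^ 2 + (h - 9) ^ 2) +
        Real.sqrt ((h - 1) ^ 2 + (h - 8) ^ 2 + (h - 9) ^ 2)) ∧
    Real.sqrt ((6 - 1 : ℝ) ^ 2 + (6 - 8) ^ 2 + (6 - 9) ^ 2) +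
      Real.sqrt ((6 - 1 : ℝ) ^ 2 + (6 - 8) ^ 2 + (6 - 9) ^ 2) = 2 * Real.sqrt 38 ∧
    dist (pt 1 8 9) (pt 4 8 8) + dist (pt 4 8 8) (pt 6 6 8) +
      dist (pt 6 6 8) (pt 4 7 7) + dist (pt 4 7 7) (pt 1 8 9) =
      Real.sqrt 10 + Real.sqrt 8 + Real.sqrt 6 + Real.sqrt 14 ∧
    Real.sqrt 10 + Real.sqrt 8 + Real.sqrt 6 + Real.sqrt 14 < 2 * Real.sqrt 38 := by
  refine ⟨?_, ?_, ?_, ?_⟩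
  · intro h
    have h38 : (38 : ℝ) ≤ (h - 1) ^ 2 + (h - 8) ^ 2 + (h - 9) ^ 2 := by nlinarith [sq_nonneg (h - 6)]
    have := Real.sqrt_le_sqrt h38
    linarith
  · norm_num; ring
  · rw [dist_pt, dist_pt, dist_pt, dist_pt]
    norm_num
  · have h10 : Real.sqrt 10 < 3.17 := by
      rw [show (3.17 : ℝ) = Real.sqrt (3.17 ^ 2) by rw [Real.sqrt_sq]; norm_num]
      exact Real.sqrt_lt_sqrt (by norm_num) (by norm_num)
    have h8 : Real.sqrt 8 < 2.83 := by
      rw [show (2.83 : ℝ) = Real.sqrt (2.83 ^ 2) by rw [Real.sqrt_sq]; norm_num]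
      exact Real.sqrt_lt_sqrt (by norm_num) (by norm_num)
    have h6 : Real.sqrt 6 < 2.45 := by
      rw [show (2.45 : ℝ) = Real.sqrt (2.45 ^ 2) by rw [Real.sqrt_sq]; norm_num]
      exact Real.sqrt_lt_sqrt (by norm_num) (by norm_num)
    have h14 : Real.sqrt 14 < 3.75 := by
      rw [show (3.75 : ℝ) = Real.sqrt (3.75 ^ 2) by rw [Real.sqrt_sq]; norm_num]
      exact Real.sqrt_lt_sqrt (by norm_num) (by norm_num)
    have h38 : (6.16 : ℝ) < Real.sqrt 38 := by
      rw [show (6.16 : ℝ) = Real.sqrt (6.16 ^ 2) by rw [Real.sqrt_sq]; norm_num]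
      exact Real.sqrt_lt_sqrt (by norm_num) (by norm_num)
    linarith
end
end
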